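/- arXiv:2008.12581 — 4 statements merged into one kernel-verified Lean document; each statement's English description precedes it below -/
import Mathlib

section
/- Let f ∈ C⁰(B⁺, ℂ) be a continuous function on the open upper half-disc such that its square f² extends to a continuous function on B⁺ ∪ I. Then f itself extends to a continuous function on B⁺ ∪ I. -/
open Complex MeasureTheory Set Metric Filter Topology

noncomputable section

/-- Points of `ℝ³`, written as iterated pairs. -/
abbrev P3 : Type := ℝ × ℝ × ℝ

/-- The open upper unit half-disc `B⁺`. -/
def Bplus : Set ℂ := {w : ℂ | ‖w‖ < 1 ∧ 0 < w.im}

/-- The straight part `I = (-1,1)` of the boundary of `B⁺`. -/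
def Iseg : Set ℂ := {w : ℂ | w.im = 0 ∧ |w.re| < 1}

/-- The open unit disc `B`. -/
def Bdisc : Set ℂ := {w : ℂ | ‖w‖ < 1}

/-- The open upper half-disc of radius `ρ` centred at `0`. -/
def Bplusr (ρ : ℝ) : Set ℂ := {w : ℂ | ‖w‖ < ρ ∧ 0 < w.im}

/-- The parameters `u` of the horizontal segment `I_ρ` at height `ρ`. -/
def Irho (ρ : ℝ) : Set ℝ := {u : ℝ | (⟨u, ρ⟩ : ℂ) ∈ Bplus}

/-- Partial derivative in direction `u` of a real-valued function on `ℂ`. -/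
def du (f : ℂ → ℝ) (w : ℂ) : ℝ := fderiv ℝ f w 1

/-- Partial derivative in direction `v` of a real-valued function on `ℂ`. -/
def dv (f : ℂ → ℝ) (w : ℂ) : ℝ := fderiv ℝ f w Complex.I

/-- Laplacian of a real-valued function on `ℂ`. -/
def lapl (f : ℂ → ℝ) (w : ℂ) : ℝ := du (fun z => du f z) w + dv (fun z => dv f z) w

/-- Wirtinger derivative `f_w = (f_u - i f_v)/2` of a real-valued function. -/
def wder (f : ℂ → ℝ) (w : ℂ) : ℂ := ((du f w : ℂ) - Complex.I * (dv f w : ℂ)) / 2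

/-- Wirtinger derivative `f_{w̄} = (f_u + i f_v)/2` of a complex-valued function. -/
def wbar (f : ℂ → ℂ) (w : ℂ) : ℂ := (fderiv ℝ f w 1 + Complex.I * fderiv ℝ f w Complex.I) / 2

/-- Componentwise Wirtinger derivative `f_{w̄}` of a `ℂ²`-valued function. -/
def wbar2 (f : ℂ → ℂ × ℂ) (w : ℂ) : ℂ × ℂ :=
  (wbar (fun z => (f z).1) w, wbar (fun z => (f z).2) w)

/-- First component of a `ℝ³`-valued map. -/
def c1 (x : ℂ → P3) : ℂ → ℝ := fun w => (x w).1
/-- Second component of a `ℝ³`-valued map. -/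
def c2 (x : ℂ → P3) : ℂ → ℝ := fun w => (x w).2.1
/-- Third component of a `ℝ³`-valued map. -/
def c3 (x : ℂ → P3) : ℂ → ℝ := fun w => (x w).2.2

/-- The partial derivative `x_u` of `x : ℂ → ℝ³`. -/
def gradU (x : ℂ → P3) (w : ℂ) : P3 := (du (c1 x) w, du (c2 x) w, du (c3 x) w)
/-- The partial derivative `x_v` of `x : ℂ → ℝ³`. -/
def gradV (x : ℂ → P3) (w : ℂ) : P3 := (dv (c1 x) w, dv (c2 x) w, dv (c3 x) w)
/-- The componentwise Laplacian `Δx` of `x : ℂ → ℝ³`. -/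
def lap3 (x : ℂ → P3) (w : ℂ) : P3 := (lapl (c1 x) w, lapl (c2 x) w, lapl (c3 x) w)

/-- Euclidean scalar product on `ℝ³`. -/
def dot3 (a b : P3) : ℝ := a.1 * b.1 + a.2.1 * b.2.1 + a.2.2 * b.2.2

/-- Cross product on `ℝ³`. -/
def cross3 (a b : P3) : P3 :=
  (a.2.1 * b.2.2 - a.2.2 * b.2.1, a.2.2 * b.1 - a.1 * b.2.2, a.1 * b.2.1 - a.2.1 * b.1)

/-- Squared Euclidean norm on `ℝ³`. -/
def normSq3 (p : P3) : ℝ := p.1 ^ 2 + p.2.1 ^ 2 + p.2.2 ^ 2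

/-- `|∇x|² = |x_u|² + |x_v|²`. -/
def gradSq (x : ℂ → P3) (w : ℂ) : ℝ := normSq3 (gradU x w) + normSq3 (gradV x w)

/-- `ψ_{p¹}`. -/
def psip1 (ψ : ℝ × ℝ → ℝ) (p : ℝ × ℝ) : ℝ := fderiv ℝ ψ p (1, 0)
/-- `ψ_{p²}`. -/
def psip2 (ψ : ℝ × ℝ → ℝ) (p : ℝ × ℝ) : ℝ := fderiv ℝ ψ p (0, 1)

/-- Divergence of a vector field `Q : ℝ³ → ℝ³`. -/
def divQ (Q : P3 → P3) (p : P3) : ℝ :=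
  fderiv ℝ (fun p => (Q p).1) p (1, 0, 0) + fderiv ℝ (fun p => (Q p).2.1) p (0, 1, 0)
    + fderiv ℝ (fun p => (Q p).2.2) p (0, 0, 1)

/-- The prescribed mean curvature `H = ½ div Q`. -/
def Hfun (Q : P3 → P3) (p : P3) : ℝ := divQ Q p / 2

/-- `q(p) = Q³(p) − ψ_{p¹}Q¹(p) − ψ_{p²}Q²(p)`. -/
def qfun (ψ : ℝ × ℝ → ℝ) (Q : P3 → P3) (p : P3) : ℝ :=
  (Q p).2.2 - psip1 ψ (p.1, p.2.1) * (Q p).1 - psip2 ψ (p.1, p.2.1) * (Q p).2.1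

/-- The tangent vector `t(s)` along the boundary curve of the support surface. -/
def tvec (γ : ℝ → ℝ) (ψ : ℝ × ℝ → ℝ) (s : ℝ) : P3 :=
  (1, deriv γ s, psip1 ψ (s, γ s) + psip2 ψ (s, γ s) * deriv γ s)

/-- The auxiliary function `z¹`. -/
def z1 (ψ : ℝ × ℝ → ℝ) (x : ℂ → P3) (w : ℂ) : ℂ :=
  -Complex.I * (psip1 ψ ((x w).1, (x w).2.1) : ℂ) * wder (c1 x) w
    - Complex.I * (psip2 ψ ((x w).1, (x w).2.1) : ℂ) * wder (c2 x) w
    + Complex.I * wder (c3 x) w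

/-- The auxiliary function `z²`. -/
def z2 (γ : ℝ → ℝ) (ψ : ℝ × ℝ → ℝ) (Q : P3 → P3) (x : ℂ → P3) (w : ℂ) : ℂ :=
  (1 - Complex.I * (Complex.ofReal (qfun ψ Q (x w))) * (Complex.ofReal (deriv γ ((x w).1)))) * wder (c1 x) w
    + ((Complex.ofReal (deriv γ ((x w).1))) + Complex.I * (Complex.ofReal (qfun ψ Q (x w)))) * wder (c2 x) w
    + ((psip1 ψ ((x w).1, (x w).2.1) : ℂ)
        + (psip2 ψ ((x w).1, (x w).2.1) : ℂ) * (Complex.ofReal (deriv γ ((x w).1)))) * wder (c3 x) w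

/-- `z = (z¹, z²)`. -/
def zpair (γ : ℝ → ℝ) (ψ : ℝ × ℝ → ℝ) (Q : P3 → P3) (x : ℂ → P3) (w : ℂ) : ℂ × ℂ :=
  (z1 ψ x w, z2 γ ψ Q x w)

/-- The reflection `ẑ` of `z` across `I`. -/
def zhat (γ : ℝ → ℝ) (ψ : ℝ × ℝ → ℝ) (Q : P3 → P3) (x : ℂ → P3) (w : ℂ) : ℂ × ℂ :=
  if 0 ≤ w.im then zpair γ ψ Q x w
  else ((starRingEnd ℂ) ((zpair γ ψ Q x ((starRingEnd ℂ) w)).1),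
        (starRingEnd ℂ) ((zpair γ ψ Q x ((starRingEnd ℂ) w)).2))

/-- The even reflection `x̂` of `x` across `I`. -/
def xhat (x : ℂ → P3) (w : ℂ) : P3 := if 0 ≤ w.im then x w else x ((starRingEnd ℂ) w)

/-- Euclidean norm on `ℂ²`. -/
def cnorm2 (p : ℂ × ℂ) : ℝ := Real.sqrt (‖p.1‖ ^ 2 + ‖p.2‖ ^ 2)

/-- Euclidean norm on `ℂ³`. -/
def cnorm3 (p : ℂ × ℂ × ℂ) : ℝ :=
  Real.sqrt (‖p.1‖ ^ 2 + ‖p.2.1‖ ^ 2 + ‖p.2.2‖ ^ 2)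

/-- The local free-boundary setting with the smallness condition, together with the
local H-surface conditions on `x`. -/
structure HSetting (q₀ ε r : ℝ) (γ : ℝ → ℝ) (ψ : ℝ × ℝ → ℝ) (Q : P3 → P3)
    (x : ℂ → P3) : Prop where
  hr : 0 < r
  hq₀ : 0 < q₀
  hq₁ : q₀ < 1
  hγ : ContDiffOn ℝ 2 γ (Icc (-r) r)
  hγ0 : γ 0 = 0
  hγ'0 : deriv γ 0 = 0
  hψ : ContDiffOn ℝ 2 ψ (closedBall (0 : ℝ × ℝ) r)
  hψ0 : ψ (0, 0) = 0
  hψ'0 : fderiv ℝ ψ (0, 0) = 0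
  hQ : ContDiff ℝ 1 Q
  hqbound : ∀ p : P3, normSq3 p ≤ r ^ 2 → |qfun ψ Q p| ≤ q₀
  hsmallγ : ∀ s ∈ Icc (-r) r, |deriv γ s| ≤ ε
  hsmallψ : ∀ p ∈ closedBall (0 : ℝ × ℝ) r, ‖fderiv ℝ ψ p‖ ≤ ε
  hx2 : ContDiffOn ℝ 2 x Bplus
  hxc : ContinuousOn x (closure Bplus)
  hxD : IntegrableOn (gradSq x) Bplus volume
  hxr : ∀ w ∈ closure Bplus, normSq3 (x w) < r ^ 2
  hx0 : x 0 = 0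
  hRellich : ∀ w ∈ Bplus, lap3 x w = (2 * Hfun Q (x w)) • cross3 (gradU x w) (gradV x w)
  hconf1 : ∀ w ∈ Bplus, normSq3 (gradU x w) = normSq3 (gradV x w)
  hconf2 : ∀ w ∈ Bplus, dot3 (gradU x w) (gradV x w) = 0
  hbd1 : ∀ w ∈ Iseg, (x w).2.2 = ψ ((x w).1, (x w).2.1)
  hbd2 : ∀ w ∈ Iseg, γ ((x w).1) ≤ (x w).2.1

/-- The stationarity boundary relation coming from the first variation of `E_Q`. -/
def StationarityRel (γ : ℝ → ℝ) (ψ : ℝ × ℝ → ℝ) (Q : P3 → P3) (x : ℂ → P3) : Prop :=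
  ∀ α : ℂ → ℝ, ContDiff ℝ 1 α → HasCompactSupport α → tsupport α ⊆ Bplus ∪ Iseg →
    Tendsto (fun ρ : ℝ => ∫ u in Irho ρ,
        α ⟨u, ρ⟩ * dot3 (tvec γ ψ ((x ⟨u, ρ⟩).1))
          (gradV x ⟨u, ρ⟩ + cross3 (Q (x ⟨u, ρ⟩)) (gradU x ⟨u, ρ⟩)))
      (𝓝[>] (0 : ℝ)) (𝓝 0)

theorem Complex.exists_continuousOn_sq_eq {a : ℂ} (ha : a ≠ 0) :
    ∃ V ∈ 𝓝 a, ∃ r : ℂ → ℂ, ContinuousOn r V ∧ ∀ z ∈ V, r z ≠ 0 ∧ r z ^ 2 = z := by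
  set V := (fun z => z / a) ⁻¹' slitPlane
  have hV : IsOpen V := isOpen_slitPlane.preimage (continuous_id.div_const a)
  have haV : a ∈ V := by simp [V, div_self ha, one_mem_slitPlane]
  refine ⟨V, hV.mem_nhds haV, fun z => a ^ (2⁻¹ : ℂ) * (z / a) ^ (2⁻¹ : ℂ), ?_, ?_⟩
  · exact continuousOn_const.mul fun z hz => ((continuousAt_cpow_const (b := 2⁻¹) hz).comp
      (f := fun z => z / a) (continuousAt_id.div_const a)).continuousWithinAt
  · intro z hz
    have hsqrt (w : ℂ) : (w ^ (2⁻¹ : ℂ)) ^ 2 = w := by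
      exact_mod_cast cpow_nat_inv_pow w two_ne_zero
    have hsq : (a ^ (2⁻¹ : ℂ) * (z / a) ^ (2⁻¹ : ℂ)) ^ 2 = z := by
      rw [mul_pow, hsqrt, hsqrt, mul_div_cancel₀ _ ha]
    have hz0 : z ≠ 0 := fun h => slitPlane_ne_zero hz (by simp [h])
    exact ⟨fun h0 => hz0 (by simpa [h0] using hsq.symm), hsq⟩

/-- If `a ≠ 0`, then on the connected set `s ∩ ball x δ` the function `f` is `±` a continuous
branch of `√(f²)`, with one sign throughout; if `a = 0`, then `‖f‖ = √‖f²‖ → 0`. -/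
theorem Convex.exists_tendsto_of_tendsto_sq {E : Type*} [NormedAddCommGroup E]
    [NormedSpace ℝ E] {s : Set E} (hs : Convex ℝ s) {f : E → ℂ} (hf : ContinuousOn f s)
    {x : E} {a : ℂ} (h : Tendsto (fun z => f z ^ 2) (𝓝[s] x) (𝓝 a)) :
    ∃ L, Tendsto f (𝓝[s] x) (𝓝 L) := by
  rcases eq_or_ne a 0 with rfl | ha
  · refine ⟨0, tendsto_zero_iff_norm_tendsto_zero.mpr ?_⟩
    have := (tendsto_zero_iff_norm_tendsto_zero.mp h).sqrt
    simpa only [norm_pow, Real.sqrt_sq (norm_nonneg _), Real.sqrt_zero] using this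
  obtain ⟨V, hV, r, hr, hrV⟩ := Complex.exists_continuousOn_sq_eq ha
  obtain ⟨O, hO, hxO, hOs⟩ := mem_nhdsWithin.mp (h hV)
  obtain ⟨δ, hδ, hδO⟩ := Metric.isOpen_iff.mp hO x hxO
  set S := s ∩ ball x δ
  have hSV : MapsTo (fun z => f z ^ 2) S V := fun z hz => hOs ⟨hδO hz.2, hz.1⟩
  have hg : ContinuousOn (fun z => r (f z ^ 2)) S :=
    hr.comp ((hf.mono inter_subset_left).pow 2) hSV
  have hsign := (hs.inter (convex_ball x δ)).isPreconnected.eq_or_eq_neg_of_sq_eq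
    (hf.mono inter_subset_left) hg (fun z hz => ((hrV _ (hSV hz)).2).symm)
    (fun hz => (hrV _ (hSV hz)).1)
  have hgt : Tendsto (fun z => r (f z ^ 2)) (𝓝[s] x) (𝓝 (r a)) :=
    (hr.continuousAt hV).tendsto.comp h
  have hSx : S ∈ 𝓝[s] x := inter_mem_nhdsWithin s (ball_mem_nhds x hδ)
  rcases hsign with hpos | hneg
  · exact ⟨r a, hgt.congr' (mem_of_superset hSx fun z hz => (hpos hz).symm)⟩
  · exact ⟨-r a, hgt.neg.congr' (mem_of_superset hSx fun z hz => (hneg hz).symm)⟩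

theorem Bplus_eq_ball_inter : Bplus = ball 0 1 ∩ {w : ℂ | 0 < w.im} := by
  ext w
  simp [Bplus]

theorem convex_Bplus : Convex ℝ Bplus := by
  rw [Bplus_eq_ball_inter]
  exact (convex_ball 0 1).inter (convex_halfSpace_im_gt 0)

theorem Iseg_subset_closure_Bplus : Iseg ⊆ closure Bplus := by
  rintro w ⟨him, hre⟩
  rw [Bplus_eq_ball_inter]
  refine isOpen_ball.inter_closure ⟨?_, ?_⟩
  · rw [mem_ball_zero_iff, ← Complex.re_add_im w, him]
    simpa using hre
  · rw [Complex.closure_setOfPred_lt_im]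
    exact him.ge

/-- Heinz–Hildebrandt–Nitsche Lemma, part (a): if `f` is continuous on `B⁺` and `f²`
extends continuously to `B⁺ ∪ I`, then so does `f`. -/
theorem continuous_extension_of_sq_extension (f : ℂ → ℂ)
    (hf : ContinuousOn f Bplus)
    (hsq : ∃ F : ℂ → ℂ, ContinuousOn F (Bplus ∪ Iseg) ∧ EqOn F (fun w => f w ^ 2) Bplus) :
    ∃ G : ℂ → ℂ, ContinuousOn G (Bplus ∪ Iseg) ∧ EqOn G f Bplus := by
  obtain ⟨F, hFc, hFe⟩ := hsq
  have hlim : ∀ w ∈ Bplus ∪ Iseg, ∃ L, Tendsto f (𝓝[Bplus] w) (𝓝 L) := fun w hw =>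
    convex_Bplus.exists_tendsto_of_tendsto_sq hf
      (((hFc w hw).mono subset_union_left).tendsto.congr' hFe.eventuallyEq_nhdsWithin)
  refine ⟨extendFrom Bplus f, continuousOn_extendFrom ?_ hlim, extendFrom_extends hf⟩
  exact union_subset subset_closure Iseg_subset_closure_Bplus

end
end

section
/- Let ρ₀ ∈ (0,1) and f ∈ C⁰([−ρ₀, ρ₀], ℂ) satisfy Re(f(u))·Im(f(u)) = 0 for all u ∈ [−ρ₀, ρ₀], and suppose there exist constants c > 0 and α ∈ (0,1] such that |f²(u₁) − f²(u₂)| ≤ c|u₁ − u₂|^{2α} for all u₁, u₂ ∈ [−ρ₀, ρ₀]. Then f is Hölder continuous with exponent α on [−ρ₀, ρ₀], i.e. there is a constant C > 0 with |f(u₁) − f(u₂)| ≤ C|u₁ − u₂|^α for all u₁, u₂ ∈ [−ρ₀, ρ₀]. -/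
open Complex MeasureTheory Set Metric Filter Topology

noncomputable section

/-!
Since `z² - w² = (z - w)(z + w)` and `‖z + w‖² - ‖z - w‖² = 4⟪z, w⟫`, we have
`‖z - w‖² ≤ ‖z² - w²‖` whenever `⟪z, w⟫ ≥ 0`, so for such values the `2α`-Hölder bound on `f²`
is directly an `α`-Hölder bound on `f`. As `f` takes values on the coordinate axes,
`⟪f u₁, f u₂⟫ < 0` only when `f u₁` and `f u₂` lie on one axis with opposite signs; then, by
the intermediate value theorem, `f` meets the other axis at some `u₃` between `u₁` and `u₂`,
and the estimate applies to `(u₁, u₃)` and `(u₂, u₃)`.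
-/

open scoped InnerProductSpace

namespace Complex

theorem norm_sub_sq_le_norm_sq_sub_sq {z w : ℂ} (h : 0 ≤ ⟪z, w⟫_ℝ) :
    ‖z - w‖ ^ 2 ≤ ‖z ^ 2 - w ^ 2‖ := by
  have hsub_le_add : ‖z - w‖ ≤ ‖z + w‖ :=
    (pow_le_pow_iff_left₀ (norm_nonneg _) (norm_nonneg _) two_ne_zero).mp
      (by rw [norm_add_sq_real, norm_sub_sq_real]; linarith)
  calc ‖z - w‖ ^ 2 = ‖z - w‖ * ‖z - w‖ := sq _
    _ ≤ ‖z - w‖ * ‖z + w‖ := by gcongr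
    _ = ‖z ^ 2 - w ^ 2‖ := by rw [← norm_mul, mul_comm, sq_sub_sq]

theorem norm_sub_le_of_inner_nonneg {z w : ℂ} {M : ℝ} (h : 0 ≤ ⟪z, w⟫_ℝ) (hM : 0 ≤ M)
    (hsq : ‖z ^ 2 - w ^ 2‖ ≤ M ^ 2) : ‖z - w‖ ≤ M :=
  (pow_le_pow_iff_left₀ (norm_nonneg _) hM two_ne_zero).mp
    ((norm_sub_sq_le_norm_sq_sub_sq h).trans hsq)

theorem inner_eq_zero_of_inner_neg {z w v : ℂ} (hz : z.re * z.im = 0) (hw : w.re * w.im = 0)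
    (hzw : ⟪z, w⟫_ℝ < 0) (hzv : ⟪z, v⟫_ℝ = 0) : ⟪w, v⟫_ℝ = 0 := by
  -- `⟪z, w⟫ < 0` puts `z` and `w` on the same axis, and `v` is orthogonal to that axis.
  simp only [Complex.inner, mul_re, conj_re, conj_im] at *
  rcases mul_eq_zero.1 hz with hz | hz <;> rcases mul_eq_zero.1 hw with hw | hw <;>
    simp_all <;> rcases hzv with h | h <;> simp_all

end Complex

theorem norm_sub_le_two_mul_of_norm_sq_sub_sq_le {f : ℝ → ℂ} {a b M : ℝ}
    (hf : ContinuousOn f (uIcc a b)) (haxes : ∀ u ∈ uIcc a b, (f u).re * (f u).im = 0)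
    (hM : 0 ≤ M) (hsq : ∀ s ∈ uIcc a b, ∀ t ∈ uIcc a b, ‖f s ^ 2 - f t ^ 2‖ ≤ M ^ 2) :
    ‖f a - f b‖ ≤ 2 * M := by
  have ha : a ∈ uIcc a b := left_mem_uIcc
  have hb : b ∈ uIcc a b := right_mem_uIcc
  by_cases hab : 0 ≤ ⟪f a, f b⟫_ℝ
  · linarith [Complex.norm_sub_le_of_inner_nonneg hab hM (hsq a ha b hb)]
  obtain ⟨c, hc, hac⟩ : ∃ c ∈ uIcc a b, ⟪f a, f c⟫_ℝ = 0 := by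
    have hcont : ContinuousOn (fun u => ⟪f a, f u⟫_ℝ) (uIcc a b) :=
      (continuous_const.inner continuous_id).comp_continuousOn hf
    refine intermediate_value_uIcc hcont ?_
    rw [real_inner_self_eq_norm_sq]
    exact mem_uIcc_of_ge (not_le.mp hab).le (by positivity)
  have hbc : ⟪f b, f c⟫_ℝ = 0 :=
    Complex.inner_eq_zero_of_inner_neg (haxes a ha) (haxes b hb) (not_le.mp hab) hac
  calc ‖f a - f b‖ ≤ ‖f a - f c‖ + ‖f b - f c‖ := by
        simpa only [dist_eq_norm] using dist_triangle_right (f a) (f b) (f c)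
    _ ≤ M + M := add_le_add
        (Complex.norm_sub_le_of_inner_nonneg hac.ge hM (hsq a ha c hc))
        (Complex.norm_sub_le_of_inner_nonneg hbc.ge hM (hsq b hb c hc))
    _ = 2 * M := (two_mul M).symm

theorem holder_of_sq_holder_general (ρ₀ : ℝ) (f : ℝ → ℂ)
    (hf : ContinuousOn f (Icc (-ρ₀) ρ₀))
    (hri : ∀ u ∈ Icc (-ρ₀) ρ₀, (f u).re * (f u).im = 0)
    (c α : ℝ) (hc : 0 < c) (hα0 : 0 < α)
    (hsq : ∀ u₁ ∈ Icc (-ρ₀) ρ₀, ∀ u₂ ∈ Icc (-ρ₀) ρ₀,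
      ‖f u₁ ^ 2 - f u₂ ^ 2‖ ≤ c * |u₁ - u₂| ^ (2 * α)) :
    ∃ C > 0, ∀ u₁ ∈ Icc (-ρ₀) ρ₀, ∀ u₂ ∈ Icc (-ρ₀) ρ₀,
      ‖f u₁ - f u₂‖ ≤ C * |u₁ - u₂| ^ α := by
  refine ⟨2 * √c, by positivity, fun u₁ hu₁ u₂ hu₂ => ?_⟩
  have hsub : uIcc u₁ u₂ ⊆ Icc (-ρ₀) ρ₀ := uIcc_subset_Icc hu₁ hu₂
  rw [mul_assoc]
  refine norm_sub_le_two_mul_of_norm_sq_sub_sq_le (hf.mono hsub) (fun u hu => hri u (hsub hu))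
    (by positivity) fun s hs t ht => ?_
  calc ‖f s ^ 2 - f t ^ 2‖ ≤ c * |s - t| ^ (2 * α) := hsq s (hsub hs) t (hsub ht)
    _ ≤ c * |u₁ - u₂| ^ (2 * α) := by
        have hst : |s - t| ≤ |u₁ - u₂| := Real.dist_le_of_mem_uIcc hs ht
        gcongr
    _ = (√c * |u₁ - u₂| ^ α) ^ 2 := by
        rw [mul_pow, Real.sq_sqrt hc.le, ← Real.rpow_natCast, ← Real.rpow_mul (abs_nonneg _)]
        ring_nf

/-- Heinz–Hildebrandt–Nitsche Lemma, part (b): a continuous function with real·imaginary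
part vanishing, whose square is `2α`-Hölder, is itself `α`-Hölder. -/
theorem holder_of_sq_holder (ρ₀ : ℝ) (hρ₀ : 0 < ρ₀) (hρ₁ : ρ₀ < 1) (f : ℝ → ℂ)
    (hf : ContinuousOn f (Icc (-ρ₀) ρ₀))
    (hri : ∀ u ∈ Icc (-ρ₀) ρ₀, (f u).re * (f u).im = 0)
    (c α : ℝ) (hc : 0 < c) (hα0 : 0 < α) (hα1 : α ≤ 1)
    (hsq : ∀ u₁ ∈ Icc (-ρ₀) ρ₀, ∀ u₂ ∈ Icc (-ρ₀) ρ₀,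
      ‖f u₁ ^ 2 - f u₂ ^ 2‖ ≤ c * |u₁ - u₂| ^ (2 * α)) :
    ∃ C > 0, ∀ u₁ ∈ Icc (-ρ₀) ρ₀, ∀ u₂ ∈ Icc (-ρ₀) ρ₀,
      ‖f u₁ - f u₂‖ ≤ C * |u₁ - u₂| ^ α :=
  holder_of_sq_holder_general ρ₀ f hf hri c α hc hα0 hsq

end
end

section
/- Let ψ : closure(B_r(0)) ⊂ ℝ² → ℝ be Lipschitz continuous with |∇ψ| ≤ L, and let x = (x¹,x²,x³) ∈ C¹(B⁺, ℝ³) ∩ C⁰(closure(B⁺), ℝ³) have finite Dirichlet integral ∫_{B⁺}|∇x|² du dv < ∞, take values with |x(w)| < r, and satisfy x³ = ψ(x¹,x²) on I. Then there is a constant c > 0 depending only on L such that for every ρ ∈ (0,1): ∫_{I_ρ} [x³ − ψ(x¹,x²)]² du ≤ c ρ ∫_{B⁺} |∇x|² du dv. -/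
open Complex MeasureTheory Set Metric Filter Topology

noncomputable section

/-! On a vertical segment from `(u, 0) ∈ I` up to `(u, ρ) ∈ I_ρ` the defect `x³ - ψ(x¹, x²)`
starts at `0`, and since `ψ` is `L`-Lipschitz it changes by at most `(1 + L)` times the
displacement of `x`. The fundamental theorem of calculus and Cauchy–Schwarz bound its square at
height `ρ` by `(1 + L)² ρ ∫₀^ρ |∇x|² dv`; these segments fill a rectangle inside `B⁺`, so
integrating over `u ∈ I_ρ` (Fubini) gives the estimate with `c = (1 + L)²`. -/

open scoped NNReal

theorem norm_sub_le_integral_norm_of_hasDerivAt {E : Type*} [NormedAddCommGroup E]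
    [NormedSpace ℝ E] [CompleteSpace E] {f f' : ℝ → E} {a b : ℝ} (hab : a ≤ b)
    (hcont : ContinuousOn f (Icc a b)) (hderiv : ∀ t ∈ Ioo a b, HasDerivAt f (f' t) t)
    (hint : IntegrableOn f' (Ioo a b)) :
    ‖f b - f a‖ ≤ ∫ t in Ioo a b, ‖f' t‖ := by
  have hint' : IntervalIntegrable f' volume a b :=
    (intervalIntegrable_iff_integrableOn_Ioo_of_le hab).2 hint
  rw [← intervalIntegral.integral_eq_sub_of_hasDerivAt_of_le hab hcont hderiv hint',
    ← integral_Ioc_eq_integral_Ioo, ← intervalIntegral.integral_of_le hab]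
  exact intervalIntegral.norm_integral_le_integral_norm hab

theorem sq_integral_le_measureReal_univ_mul_integral_sq {α : Type*} [MeasurableSpace α]
    {μ : Measure α} [IsFiniteMeasure μ] {h : α → ℝ} (hh : MemLp h 2 μ) :
    (∫ a, h a ∂μ) ^ 2 ≤ μ.real univ * ∫ a, h a ^ 2 ∂μ := by
  have h1 : Integrable h μ := hh.integrable one_le_two
  have h2 : Integrable (fun a => h a ^ 2) μ := hh.integrable_sq
  -- the discriminant of the nonnegative quadratic `t ↦ ∫ (h - t)²` is nonpositive
  have hquad : ∀ t : ℝ, 0 ≤ μ.real univ * (t * t) + (-2 * ∫ a, h a ∂μ) * t + ∫ a, h a ^ 2 ∂μ := by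
    intro t
    have hexp : ∫ a, (h a - t) ^ 2 ∂μ
        = μ.real univ * (t * t) + (-2 * ∫ a, h a ∂μ) * t + ∫ a, h a ^ 2 ∂μ := by
      have : (fun a => (h a - t) ^ 2) = fun a => (h a ^ 2 - (2 * t) * h a) + t * t := by
        funext a; ring
      have hlin : Integrable (fun a => h a ^ 2 - 2 * t * h a) μ := h2.sub (h1.const_mul _)
      rw [this, integral_add hlin (integrable_const _), integral_sub h2 (h1.const_mul _),
        integral_const_mul, integral_const, smul_eq_mul]
      ring
    rw [← hexp]
    exact integral_nonneg fun a => sq_nonneg _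
  have := discrim_le_zero hquad
  rw [discrim] at this
  linarith

theorem setIntegral_le_mul_setIntegral_of_slice_le {α β : Type*} [MeasurableSpace α]
    [MeasurableSpace β] {μ : Measure α} {ν : Measure β} [SFinite μ] [SFinite ν]
    {f : α × β → ℝ} {g : α → ℝ} {S : Set (α × β)} {A : Set α} {B : Set β} {K : ℝ}
    (hK : 0 ≤ K) (hf : 0 ≤ f) (hfS : IntegrableOn f S (μ.prod ν)) (hA : MeasurableSet A)
    (hAB : A ×ˢ B ⊆ S) (hg0 : 0 ≤ g)
    (hg : ∀ u ∈ A, IntegrableOn (fun v => f (u, v)) B ν → g u ≤ K * ∫ v in B, f (u, v) ∂ν) :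
    ∫ u in A, g u ∂μ ≤ K * ∫ p in S, f p ∂μ.prod ν := by
  have hAB' : IntegrableOn f (A ×ˢ B) (μ.prod ν) := hfS.mono_set hAB
  have hR : Integrable f ((μ.restrict A).prod (ν.restrict B)) := by
    rwa [Measure.prod_restrict]
  calc ∫ u in A, g u ∂μ ≤ ∫ u in A, K * ∫ v in B, f (u, v) ∂ν ∂μ := by
        refine integral_mono_of_nonneg (.of_forall hg0) (hR.integral_prod_left.const_mul K) ?_
        filter_upwards [hR.prod_right_ae, ae_restrict_mem hA] with u hu huA using hg u huA hu
    _ = K * ∫ p in A ×ˢ B, f p ∂μ.prod ν := by rw [integral_const_mul, setIntegral_prod f hAB']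
    _ ≤ K * ∫ p in S, f p ∂μ.prod ν :=
        mul_le_mul_of_nonneg_left (setIntegral_mono_set hfS (.of_forall hf) hAB.eventuallyLE) hK

theorem Complex.setIntegral_le_mul_setIntegral_of_slice_le {f : ℂ → ℝ} {g : ℝ → ℝ} {S : Set ℂ}
    {A B : Set ℝ} {K : ℝ} (hK : 0 ≤ K) (hf : 0 ≤ f) (hfS : IntegrableOn f S)
    (hA : MeasurableSet A) (hAB : ∀ u ∈ A, ∀ v ∈ B, (⟨u, v⟩ : ℂ) ∈ S) (hg0 : 0 ≤ g)
    (hg : ∀ u ∈ A, IntegrableOn (fun v => f ⟨u, v⟩) B → g u ≤ K * ∫ v in B, f ⟨u, v⟩) :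
    ∫ u in A, g u ≤ K * ∫ w in S, f w := by
  have he := volume_preserving_equiv_real_prod.symm
  have hemb := measurableEquivRealProd.symm.measurableEmbedding
  rw [← he.setIntegral_preimage_emb hemb, Measure.volume_eq_prod]
  refine _root_.setIntegral_le_mul_setIntegral_of_slice_le hK (fun p => hf _) ?_ hA ?_ hg0 hg
  · rw [← Measure.volume_eq_prod]
    exact (he.integrableOn_comp_preimage hemb).2 hfS
  · rintro ⟨u, v⟩ ⟨hu, hv⟩
    exact hAB u hu v hv

lemma isOpen_Bplus : IsOpen Bplus :=
  (isOpen_lt continuous_norm continuous_const).inter (isOpen_lt continuous_const continuous_im)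

lemma continuous_mk_right (u : ℝ) : Continuous fun v : ℝ => (⟨u, v⟩ : ℂ) :=
  equivRealProdCLM.symm.continuous.comp (continuous_const.prodMk continuous_id)

lemma hasDerivAt_mk_right (u v : ℝ) : HasDerivAt (fun t : ℝ => (⟨u, t⟩ : ℂ)) I v := by
  simpa [← mk_eq_add_mul_I] using
    ((hasDerivAt_id (v : ℝ)).ofReal_comp.mul_const I).const_add (u : ℂ)

lemma isOpen_Irho (ρ : ℝ) : IsOpen (Irho ρ) :=
  isOpen_Bplus.preimage
    (equivRealProdCLM.symm.continuous.comp (continuous_id.prodMk continuous_const))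

lemma mk_mem_Bplus_iff {u v : ℝ} : (⟨u, v⟩ : ℂ) ∈ Bplus ↔ u ^ 2 + v ^ 2 < 1 ∧ 0 < v := by
  change ‖_‖ < 1 ∧ _ ↔ _
  rw [norm_def, Real.sqrt_lt' one_pos, normSq_mk]
  constructor <;> rintro ⟨h, hv⟩ <;> exact ⟨by nlinarith, hv⟩

lemma mk_mem_Bplus_of_mem_Irho {u ρ v : ℝ} (hu : u ∈ Irho ρ) (hv : v ∈ Ioc 0 ρ) :
    (⟨u, v⟩ : ℂ) ∈ Bplus := by
  obtain ⟨huρ, -⟩ := mk_mem_Bplus_iff.1 hu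
  exact mk_mem_Bplus_iff.2 ⟨by nlinarith [hv.1, hv.2], hv.1⟩

lemma mk_mem_closure_Bplus_of_mem_Irho {u ρ v : ℝ} (hu : u ∈ Irho ρ) (hv : v ∈ Icc 0 ρ) :
    (⟨u, v⟩ : ℂ) ∈ closure Bplus := by
  have hρ : 0 < ρ := (mk_mem_Bplus_iff.1 hu).2
  rw [← closure_Ioc hρ.ne] at hv
  exact map_mem_closure (continuous_mk_right u) hv fun v hv => mk_mem_Bplus_of_mem_Irho hu hv

lemma mk_zero_mem_Iseg_of_mem_Irho {u ρ : ℝ} (hu : u ∈ Irho ρ) : (⟨u, 0⟩ : ℂ) ∈ Iseg := by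
  obtain ⟨huρ, -⟩ := mk_mem_Bplus_iff.1 hu
  exact ⟨rfl, by nlinarith [sq_abs u, abs_nonneg u]⟩

lemma sq_norm_le_normSq3 (p : P3) : ‖p‖ ^ 2 ≤ normSq3 p := by
  have hnn : 0 ≤ normSq3 p := by rw [normSq3]; positivity
  have hle : ‖p‖ ≤ √(normSq3 p) := by
    rw [Prod.norm_def, Prod.norm_def, Real.norm_eq_abs, Real.norm_eq_abs, Real.norm_eq_abs]
    refine max_le (Real.abs_le_sqrt ?_) (max_le (Real.abs_le_sqrt ?_) (Real.abs_le_sqrt ?_)) <;>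
      rw [normSq3] <;> nlinarith [sq_nonneg p.1, sq_nonneg p.2.1, sq_nonneg p.2.2]
  calc ‖p‖ ^ 2 ≤ √(normSq3 p) ^ 2 := pow_le_pow_left₀ (norm_nonneg p) hle 2
    _ = normSq3 p := Real.sq_sqrt hnn

lemma mem_closedBall_of_normSq3_le {r : ℝ} (hr : 0 ≤ r) {p : P3} (hp : normSq3 p ≤ r ^ 2) :
    (p.1, p.2.1) ∈ closedBall (0 : ℝ × ℝ) r := by
  rw [normSq3] at hp
  rw [mem_closedBall_zero_iff, Prod.norm_def, Real.norm_eq_abs, Real.norm_eq_abs]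
  exact max_le (abs_le_of_sq_le_sq (by nlinarith [sq_nonneg p.2.1, sq_nonneg p.2.2]) hr)
    (abs_le_of_sq_le_sq (by nlinarith [sq_nonneg p.1, sq_nonneg p.2.2]) hr)

lemma gradSq_nonneg (x : ℂ → P3) : 0 ≤ gradSq x := fun w => by
  simp only [Pi.zero_apply, gradSq, normSq3]; positivity

lemma gradV_eq_fderiv_apply_I {x : ℂ → P3} {w : ℂ} (hx : DifferentiableAt ℝ x w) :
    gradV x w = fderiv ℝ x w I := by
  unfold gradV dv c1 c2 c3
  rw [fderiv.fst hx, fderiv.fst hx.snd, fderiv.snd hx.snd, fderiv.snd hx]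
  rfl

lemma sq_norm_fderiv_apply_I_le_gradSq {x : ℂ → P3} {w : ℂ} (hx : DifferentiableAt ℝ x w) :
    ‖fderiv ℝ x w I‖ ^ 2 ≤ gradSq x w := by
  rw [← gradV_eq_fderiv_apply_I hx, gradSq, normSq3]
  nlinarith [sq_norm_le_normSq3 (gradV x w), sq_nonneg (gradU x w).1, sq_nonneg (gradU x w).2.1,
    sq_nonneg (gradU x w).2.2]

def graphDefect (ψ : ℝ × ℝ → ℝ) (p : P3) : ℝ := p.2.2 - ψ (p.1, p.2.1)

lemma abs_graphDefect_le {ψ : ℝ × ℝ → ℝ} {K : ℝ≥0} {s : Set (ℝ × ℝ)}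
    (hψ : LipschitzOnWith K ψ s) {p q : P3} (hp : (p.1, p.2.1) ∈ s) (hq : (q.1, q.2.1) ∈ s)
    (hq0 : graphDefect ψ q = 0) :
    |graphDefect ψ p| ≤ (1 + K) * ‖p - q‖ := by
  have h3 : |p.2.2 - q.2.2| ≤ ‖p - q‖ := (norm_snd_le (p - q).2).trans (norm_snd_le (p - q))
  have h12 : dist (p.1, p.2.1) (q.1, q.2.1) ≤ ‖p - q‖ := by
    rw [Prod.dist_eq, Real.dist_eq, Real.dist_eq]
    exact max_le (norm_fst_le (p - q)) ((norm_fst_le (p - q).2).trans (norm_snd_le (p - q)))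
  have hψpq : |ψ (p.1, p.2.1) - ψ (q.1, q.2.1)| ≤ K * ‖p - q‖ :=
    (hψ.dist_le_mul _ hp _ hq).trans (mul_le_mul_of_nonneg_left h12 K.coe_nonneg)
  have : graphDefect ψ p = (p.2.2 - q.2.2) - (ψ (p.1, p.2.1) - ψ (q.1, q.2.1)) := by
    rw [graphDefect] at hq0 ⊢; linarith
  rw [this]
  linarith [abs_sub (p.2.2 - q.2.2) (ψ (p.1, p.2.1) - ψ (q.1, q.2.1))]

lemma sq_graphDefect_le_of_mem_Irho {ψ : ℝ × ℝ → ℝ} {K : ℝ≥0} {s : Set (ℝ × ℝ)}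
    {x : ℂ → P3} {u ρ : ℝ} (hψ : LipschitzOnWith K ψ s) (hx : DifferentiableOn ℝ x Bplus)
    (hxc : ContinuousOn x (closure Bplus)) (hxs : ∀ w ∈ closure Bplus, ((x w).1, (x w).2.1) ∈ s)
    (hI : ∀ w ∈ Iseg, graphDefect ψ (x w) = 0) (hu : u ∈ Irho ρ)
    (hslice : IntegrableOn (fun v => gradSq x ⟨u, v⟩) (Ioo 0 ρ)) :
    graphDefect ψ (x ⟨u, ρ⟩) ^ 2 ≤ (1 + K) ^ 2 * (ρ * ∫ v in Ioo 0 ρ, gradSq x ⟨u, v⟩) := by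
  have hρ : 0 < ρ := (mk_mem_Bplus_iff.1 hu).2
  have hdx : ∀ v ∈ Ioo 0 ρ, DifferentiableAt ℝ x ⟨u, v⟩ := fun v hv =>
    hx.differentiableAt (isOpen_Bplus.mem_nhds (mk_mem_Bplus_of_mem_Irho hu ⟨hv.1, hv.2.le⟩))
  set xv : ℝ → P3 := fun v => fderiv ℝ x ⟨u, v⟩ I
  have hxv_meas : AEStronglyMeasurable xv (volume.restrict (Ioo 0 ρ)) :=
    ((measurable_fderiv_apply_const ℝ x I).comp
      (continuous_mk_right u).measurable).aestronglyMeasurable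
  have hxv_sq : ∀ v ∈ Ioo 0 ρ, ‖xv v‖ ^ 2 ≤ gradSq x ⟨u, v⟩ := fun v hv =>
    sq_norm_fderiv_apply_I_le_gradSq (hdx v hv)
  have hxv_L2 : MemLp (fun v => ‖xv v‖) 2 (volume.restrict (Ioo 0 ρ)) := by
    refine (memLp_two_iff_integrable_sq hxv_meas.norm).2 (hslice.mono' ?_ ?_)
    · exact hxv_meas.norm.pow 2
    · filter_upwards [ae_restrict_mem measurableSet_Ioo] with v hv
      rw [Real.norm_eq_abs, abs_of_nonneg (by positivity)]
      exact hxv_sq v hv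
  have hFTC : ‖x ⟨u, ρ⟩ - x ⟨u, 0⟩‖ ≤ ∫ v in Ioo 0 ρ, ‖xv v‖ := by
    refine norm_sub_le_integral_norm_of_hasDerivAt (f := fun v => x ⟨u, v⟩) hρ.le ?_ ?_ ?_
    · exact hxc.comp (continuous_mk_right u).continuousOn
        fun v hv => mk_mem_closure_Bplus_of_mem_Irho hu hv
    · exact fun v hv => (hdx v hv).hasFDerivAt.comp_hasDerivAt v (hasDerivAt_mk_right u v)
    · exact (integrable_norm_iff hxv_meas).1 (hxv_L2.integrable one_le_two)
  have hCS : (∫ v in Ioo 0 ρ, ‖xv v‖) ^ 2 ≤ ρ * ∫ v in Ioo 0 ρ, gradSq x ⟨u, v⟩ := by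
    calc (∫ v in Ioo 0 ρ, ‖xv v‖) ^ 2 ≤ ρ * ∫ v in Ioo 0 ρ, ‖xv v‖ ^ 2 := by
          simpa [Real.volume_real_Ioo_of_le hρ.le] using
            sq_integral_le_measureReal_univ_mul_integral_sq hxv_L2
      _ ≤ ρ * ∫ v in Ioo 0 ρ, gradSq x ⟨u, v⟩ :=
          mul_le_mul_of_nonneg_left
            (setIntegral_mono_on hxv_L2.integrable_sq hslice measurableSet_Ioo hxv_sq) hρ.le
  have hdefect := abs_graphDefect_le hψ (hxs _ (mk_mem_closure_Bplus_of_mem_Irho hu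
    ⟨hρ.le, le_rfl⟩)) (hxs _ (mk_mem_closure_Bplus_of_mem_Irho hu ⟨le_rfl, hρ.le⟩))
    (hI _ (mk_zero_mem_Iseg_of_mem_Irho hu))
  calc graphDefect ψ (x ⟨u, ρ⟩) ^ 2 = |graphDefect ψ (x ⟨u, ρ⟩)| ^ 2 := (sq_abs _).symm
    _ ≤ ((1 + K) * ∫ v in Ioo 0 ρ, ‖xv v‖) ^ 2 := by
        gcongr
        exact hdefect.trans (mul_le_mul_of_nonneg_left hFTC (by positivity))
    _ ≤ (1 + K) ^ 2 * (ρ * ∫ v in Ioo 0 ρ, gradSq x ⟨u, v⟩) := by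
        rw [mul_pow]; gcongr

theorem boundary_defect_estimate_general (L : ℝ) :
    ∃ c > 0, ∀ (r : ℝ) (ψ : ℝ × ℝ → ℝ) (x : ℂ → P3),
      0 < r →
      LipschitzOnWith (Real.toNNReal L) ψ (closedBall (0 : ℝ × ℝ) r) →
      ContDiffOn ℝ 1 x Bplus →
      ContinuousOn x (closure Bplus) →
      IntegrableOn (gradSq x) Bplus volume →
      (∀ w ∈ closure Bplus, normSq3 (x w) < r ^ 2) →
      (∀ w ∈ Iseg, (x w).2.2 = ψ ((x w).1, (x w).2.1)) →
      ∀ ρ : ℝ, 0 < ρ → ρ < 1 →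
        (∫ u in Irho ρ, ((x ⟨u, ρ⟩).2.2 - ψ ((x ⟨u, ρ⟩).1, (x ⟨u, ρ⟩).2.1)) ^ 2)
          ≤ c * ρ * ∫ w in Bplus, gradSq x w := by
  refine ⟨(1 + Real.toNNReal L) ^ 2, by positivity, ?_⟩
  intro r ψ x hr hψ hx hxc hxD hxr hbd ρ hρ _
  have hxs : ∀ w ∈ closure Bplus, ((x w).1, (x w).2.1) ∈ closedBall (0 : ℝ × ℝ) r :=
    fun w hw => mem_closedBall_of_normSq3_le hr.le (hxr w hw).le
  have hI : ∀ w ∈ Iseg, graphDefect ψ (x w) = 0 := fun w hw => sub_eq_zero.2 (hbd w hw)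
  refine Complex.setIntegral_le_mul_setIntegral_of_slice_le (B := Ioo 0 ρ) (by positivity)
    (gradSq_nonneg x) hxD (isOpen_Irho ρ).measurableSet
    (fun u hu v hv => mk_mem_Bplus_of_mem_Irho hu ⟨hv.1, hv.2.le⟩) (fun u => sq_nonneg _) ?_
  intro u hu hslice
  rw [mul_assoc]
  exact sq_graphDefect_le_of_mem_Irho hψ (hx.differentiableOn one_ne_zero) hxc hxs hI hu hslice

/-- The boundary integral estimate (1.13): for a map vanishing against the graph of a
Lipschitz `ψ` on `I`, the squared boundary defect on `I_ρ` is `O(ρ)` times the Dirichlet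
integral, with a constant depending only on the Lipschitz bound `L`. -/
theorem boundary_defect_estimate (L : ℝ) (hL : 0 ≤ L) :
    ∃ c > 0, ∀ (r : ℝ) (ψ : ℝ × ℝ → ℝ) (x : ℂ → P3),
      0 < r →
      LipschitzOnWith (Real.toNNReal L) ψ (closedBall (0 : ℝ × ℝ) r) →
      ContDiffOn ℝ 1 x Bplus →
      ContinuousOn x (closure Bplus) →
      IntegrableOn (gradSq x) Bplus volume →
      (∀ w ∈ closure Bplus, normSq3 (x w) < r ^ 2) →
      (∀ w ∈ Iseg, (x w).2.2 = ψ ((x w).1, (x w).2.1)) →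
      ∀ ρ : ℝ, 0 < ρ → ρ < 1 →
        (∫ u in Irho ρ, ((x ⟨u, ρ⟩).2.2 - ψ ((x ⟨u, ρ⟩).1, (x ⟨u, ρ⟩).2.1)) ^ 2)
          ≤ c * ρ * ∫ w in Bplus, gradSq x w :=
  boundary_defect_estimate_general L

end
end

section
/- In the local free-boundary setting with the smallness condition, with x satisfying the local H-surface conditions and z = (z¹,z²) defined as stated, there exists a constant c > 0 such that c⁻¹|∇x(w)| ≤ |z(w)| ≤ c|∇x(w)| for all w ∈ B⁺, where |∇x| = (|x_u|² + |x_v|²)^{1/2}. -/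
open Complex MeasureTheory Set Metric Filter Topology

noncomputable section

/-!
Conformality says exactly that `x_w = (a, b, c)` lies on the null cone `a² + b² + c² = 0`, and
`|∇x| = 2 |x_w|`. The map `x_w ↦ z` is linear with coefficients that differ by `O(ε)` from those
of the flat case `ψ = γ = 0`, where `z = (i c, a + i q b)`. On the null cone the flat map is
injective with a bound depending only on `1 - |q|`: writing `T = a + i q b`, the cone equation
becomes `(1 - q²) b² = -(c² + T (T - 2 i q b))`, so `|b|`, and then `|a| ≤ |T| + |b|`, are
controlled by `|c|` and `|T|`. An `O(ε) |x_w|` perturbation is then absorbed once `ε` is small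
compared with `1 - q₀`.
-/

lemma mul_sqrt_le_sqrt {k X Y : ℝ} (hk : 0 ≤ k) (h : k ^ 2 * X ≤ Y) : k * √X ≤ √Y := by
  rw [← Real.sqrt_sq hk, ← Real.sqrt_mul (sq_nonneg k)]
  exact Real.sqrt_le_sqrt h

lemma sqrt_le_mul_sqrt {k X Y : ℝ} (hk : 0 ≤ k) (h : Y ≤ k ^ 2 * X) : √Y ≤ k * √X := by
  rw [← Real.sqrt_sq hk, ← Real.sqrt_mul (sq_nonneg k)]
  exact Real.sqrt_le_sqrt h

lemma cnorm2_eq_norm_toLp (p : ℂ × ℂ) : cnorm2 p = ‖WithLp.toLp 2 p‖ := by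
  rw [WithLp.prod_norm_eq_of_L2]; rfl

lemma abs_cnorm2_sub_cnorm2_le (p p' : ℂ × ℂ) : |cnorm2 p - cnorm2 p'| ≤ cnorm2 (p - p') := by
  simpa only [cnorm2_eq_norm_toLp, WithLp.toLp_sub] using abs_norm_sub_norm_le _ _

lemma cnorm2_le_norm_add_norm (p : ℂ × ℂ) : cnorm2 p ≤ ‖p.1‖ + ‖p.2‖ := by
  rw [cnorm2, Real.sqrt_le_left (by positivity)]
  nlinarith [norm_nonneg p.1, norm_nonneg p.2]

lemma norm_add_norm_add_norm_le_two_mul_cnorm3 (ω : ℂ × ℂ × ℂ) :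
    ‖ω.1‖ + ‖ω.2.1‖ + ‖ω.2.2‖ ≤ 2 * cnorm3 ω := by
  rw [cnorm3, ← Real.sqrt_sq (by positivity : 0 ≤ ‖ω.1‖ + ‖ω.2.1‖ + ‖ω.2.2‖)]
  refine sqrt_le_mul_sqrt zero_le_two ?_
  nlinarith [sq_nonneg (‖ω.1‖ - ‖ω.2.1‖), sq_nonneg (‖ω.1‖ - ‖ω.2.2‖),
    sq_nonneg (‖ω.2.1‖ - ‖ω.2.2‖)]

lemma norm_I_mul_ofReal_mul_le {q : ℝ} (hq : |q| ≤ 1) (b : ℂ) : ‖I * q * b‖ ≤ ‖b‖ := by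
  rw [norm_mul, norm_mul, norm_I, one_mul, norm_real, Real.norm_eq_abs]
  exact mul_le_of_le_one_left (norm_nonneg b) hq

/-- `z` as a linear function of `ω = x_w`, with `p₁, p₂, g, q` standing for
`ψ_{p¹}, ψ_{p²}, γ̇, q` (see `zpair_eq_zlin`). -/
def zlin (p₁ p₂ g q : ℝ) (ω : ℂ × ℂ × ℂ) : ℂ × ℂ :=
  (-I * p₁ * ω.1 - I * p₂ * ω.2.1 + I * ω.2.2,
    (1 - I * q * g) * ω.1 + (g + I * q) * ω.2.1 + (p₁ + p₂ * g) * ω.2.2)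

lemma zlin_flat (q : ℝ) (ω : ℂ × ℂ × ℂ) :
    zlin 0 0 0 q ω = (I * ω.2.2, ω.1 + I * q * ω.2.1) := by
  simp only [zlin, Prod.mk.injEq]; push_cast; constructor <;> ring

lemma zlin_sub_zlin_flat (p₁ p₂ g q : ℝ) (ω : ℂ × ℂ × ℂ) :
    zlin p₁ p₂ g q ω - zlin 0 0 0 q ω =
      (-(I * p₁ * ω.1 + I * p₂ * ω.2.1), g * (ω.2.1 - I * q * ω.1) + (p₁ + p₂ * g) * ω.2.2) := by
  simp only [zlin, Prod.mk_sub_mk, Prod.mk.injEq]; push_cast; constructor <;> ring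

lemma null_cone_real_estimate {s A B C T : ℝ} (hs0 : 0 ≤ s) (hs1 : s ≤ 1) (hA : 0 ≤ A)
    (hB : 0 ≤ B) (hT : 0 ≤ T) (hsB : s * B ^ 2 ≤ C ^ 2 + T ^ 2 + 2 * T * B) (hAB : A ≤ T + B) :
    s ^ 2 * (A ^ 2 + B ^ 2 + C ^ 2) ≤ 20 * (C ^ 2 + T ^ 2) := by
  have hB2 : s ^ 2 * B ^ 2 ≤ 6 * (C ^ 2 + T ^ 2) := by
    nlinarith [sq_nonneg (s * B - 2 * T), mul_le_mul_of_nonneg_left hsB hs0, sq_nonneg C,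
      sq_nonneg T]
  have hA2 : A ^ 2 ≤ 2 * T ^ 2 + 2 * B ^ 2 := by
    nlinarith [mul_le_mul hAB hAB hA (add_nonneg hT hB), sq_nonneg (T - B)]
  have hs2 : s ^ 2 ≤ 1 := by nlinarith
  nlinarith [mul_le_mul_of_nonneg_left hA2 (sq_nonneg s),
    mul_le_mul_of_nonneg_right hs2 (sq_nonneg C), mul_le_mul_of_nonneg_right hs2 (sq_nonneg T)]

lemma le_cnorm2_zlin_flat {q : ℝ} (hq : |q| ≤ 1) {ω : ℂ × ℂ × ℂ}
    (hω : ω.1 ^ 2 + ω.2.1 ^ 2 + ω.2.2 ^ 2 = 0) :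
    (1 - |q|) / 5 * cnorm3 ω ≤ cnorm2 (zlin 0 0 0 q ω) := by
  obtain ⟨a, b, c⟩ := ω
  dsimp only at hω
  set T := a + I * q * b with hT
  have hAB : ‖a‖ ≤ ‖T‖ + ‖b‖ :=
    calc ‖a‖ = ‖T - I * q * b‖ := by rw [hT, add_sub_cancel_right]
      _ ≤ ‖T‖ + ‖I * q * b‖ := norm_sub_le _ _
      _ ≤ ‖T‖ + ‖b‖ := by gcongr; exact norm_I_mul_ofReal_mul_le hq b
  have hcone : ((1 - q ^ 2 : ℝ) : ℂ) * b ^ 2 = -(c ^ 2 + T * (T - 2 * (I * q * b))) := by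
    rw [hT]; push_cast; linear_combination hω - (q : ℂ) ^ 2 * b ^ 2 * I_sq
  have hsB : (1 - |q|) * ‖b‖ ^ 2 ≤ ‖c‖ ^ 2 + ‖T‖ ^ 2 + 2 * ‖T‖ * ‖b‖ := by
    have h1q : 1 - |q| ≤ 1 - q ^ 2 := by nlinarith [sq_abs q, abs_nonneg q]
    calc (1 - |q|) * ‖b‖ ^ 2 ≤ (1 - q ^ 2) * ‖b‖ ^ 2 := by gcongr
      _ = ‖((1 - q ^ 2 : ℝ) : ℂ) * b ^ 2‖ := by
        rw [norm_mul, norm_pow, norm_real, Real.norm_of_nonneg (by linarith [abs_nonneg q])]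
      _ ≤ ‖c‖ ^ 2 + ‖T‖ * (‖T‖ + 2 * ‖b‖) := by
        rw [hcone, norm_neg]
        refine (norm_add_le _ _).trans ?_
        rw [norm_pow, norm_mul]
        gcongr
        refine (norm_sub_le _ _).trans ?_
        rw [norm_mul (2 : ℂ), RCLike.norm_two]
        gcongr
        exact norm_I_mul_ofReal_mul_le hq b
      _ = ‖c‖ ^ 2 + ‖T‖ ^ 2 + 2 * ‖T‖ * ‖b‖ := by ring
  have key := null_cone_real_estimate (by linarith) (by linarith [abs_nonneg q]) (norm_nonneg a)
    (norm_nonneg b) (norm_nonneg T) hsB hAB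
  rw [zlin_flat, cnorm2, cnorm3, norm_mul, norm_I, one_mul]
  refine mul_sqrt_le_sqrt (by linarith) ?_
  nlinarith [sq_nonneg ‖a‖, sq_nonneg ‖b‖, sq_nonneg ‖c‖]

lemma cnorm2_zlin_flat_le {q : ℝ} (hq : |q| ≤ 1) (ω : ℂ × ℂ × ℂ) :
    cnorm2 (zlin 0 0 0 q ω) ≤ 2 * cnorm3 ω := by
  obtain ⟨a, b, c⟩ := ω
  have hT : ‖a + I * q * b‖ ≤ ‖a‖ + ‖b‖ :=
    (norm_add_le _ _).trans (by gcongr; exact norm_I_mul_ofReal_mul_le hq b)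
  rw [zlin_flat, cnorm2, cnorm3, norm_mul, norm_I, one_mul]
  refine sqrt_le_mul_sqrt zero_le_two ?_
  nlinarith [mul_le_mul hT hT (norm_nonneg _) (by positivity), sq_nonneg (‖a‖ - ‖b‖),
    norm_nonneg c]

lemma cnorm2_zlin_sub_zlin_flat_le {p₁ p₂ g q ε : ℝ} (hp₁ : |p₁| ≤ ε) (hp₂ : |p₂| ≤ ε)
    (hg : |g| ≤ ε) (hq : |q| ≤ 1) (hε : ε ≤ 1) (ω : ℂ × ℂ × ℂ) :
    cnorm2 (zlin p₁ p₂ g q ω - zlin 0 0 0 q ω) ≤ 4 * ε * cnorm3 ω := by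
  obtain ⟨a, b, c⟩ := ω
  have hε0 : 0 ≤ ε := (abs_nonneg g).trans hg
  have h₁ : ‖I * p₁ * a + I * p₂ * b‖ ≤ ε * ‖a‖ + ε * ‖b‖ := by
    refine (norm_add_le _ _).trans ?_
    simp only [norm_mul, norm_I, one_mul, norm_real, Real.norm_eq_abs]
    gcongr
  have h₂ : ‖g * (b - I * q * a) + (p₁ + p₂ * g) * c‖ ≤ ε * (‖a‖ + ‖b‖) + 2 * ε * ‖c‖ := by
    refine (norm_add_le _ _).trans ?_
    simp only [norm_mul, norm_real, Real.norm_eq_abs]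
    gcongr
    · refine (norm_sub_le _ _).trans ?_
      rw [add_comm]
      gcongr
      exact norm_I_mul_ofReal_mul_le hq a
    · refine (norm_add_le _ _).trans ?_
      simp only [norm_mul, norm_real, Real.norm_eq_abs]
      nlinarith [mul_le_mul hp₂ (hg.trans hε) (abs_nonneg g) hε0]
  calc cnorm2 (zlin p₁ p₂ g q (a, b, c) - zlin 0 0 0 q (a, b, c))
      ≤ ε * ‖a‖ + ε * ‖b‖ + (ε * (‖a‖ + ‖b‖) + 2 * ε * ‖c‖) := by
        rw [zlin_sub_zlin_flat]
        refine (cnorm2_le_norm_add_norm _).trans ?_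
        rw [norm_neg]
        exact add_le_add h₁ h₂
    _ = 2 * ε * (‖a‖ + ‖b‖ + ‖c‖) := by ring
    _ ≤ 2 * ε * (2 * cnorm3 (a, b, c)) := by
        gcongr; exact norm_add_norm_add_norm_le_two_mul_cnorm3 (a, b, c)
    _ = 4 * ε * cnorm3 (a, b, c) := by ring

lemma zlin_comparable {q₀ ε p₁ p₂ g q : ℝ} (hq : |q| ≤ q₀) (hp₁ : |p₁| ≤ ε) (hp₂ : |p₂| ≤ ε)
    (hg : |g| ≤ ε) (hε : 40 * ε ≤ 1 - q₀) {ω : ℂ × ℂ × ℂ}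
    (hω : ω.1 ^ 2 + ω.2.1 ^ 2 + ω.2.2 ^ 2 = 0) :
    (1 - q₀) / 10 * cnorm3 ω ≤ cnorm2 (zlin p₁ p₂ g q ω) ∧
      cnorm2 (zlin p₁ p₂ g q ω) ≤ 3 * cnorm3 ω := by
  have hε0 : 0 ≤ ε := (abs_nonneg g).trans hg
  have hq₀ : 0 ≤ q₀ := (abs_nonneg q).trans hq
  have hq1 : |q| ≤ 1 := by linarith
  have hN : 0 ≤ cnorm3 ω := Real.sqrt_nonneg _
  have hflat_ge := le_cnorm2_zlin_flat hq1 hω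
  have hflat_le := cnorm2_zlin_flat_le hq1 ω
  have herr := cnorm2_zlin_sub_zlin_flat_le hp₁ hp₂ hg hq1 (by linarith) ω
  have hdiff := abs_le.mp ((abs_cnorm2_sub_cnorm2_le _ _).trans herr)
  constructor
  · nlinarith [mul_le_mul_of_nonneg_right hq hN, mul_le_mul_of_nonneg_right hε hN]
  · nlinarith [mul_le_mul_of_nonneg_right hε hN]

lemma abs_psip1_le_norm_fderiv (ψ : ℝ × ℝ → ℝ) (p : ℝ × ℝ) :
    |psip1 ψ p| ≤ ‖fderiv ℝ ψ p‖ := by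
  simpa [psip1] using (fderiv ℝ ψ p).le_opNorm (1, 0)

lemma abs_psip2_le_norm_fderiv (ψ : ℝ × ℝ → ℝ) (p : ℝ × ℝ) :
    |psip2 ψ p| ≤ ‖fderiv ℝ ψ p‖ := by
  simpa [psip2] using (fderiv ℝ ψ p).le_opNorm (0, 1)

lemma norm_wder_sq (f : ℂ → ℝ) (w : ℂ) : ‖wder f w‖ ^ 2 = (du f w ^ 2 + dv f w ^ 2) / 4 := by
  have h : wder f w = ((du f w / 2 : ℝ) : ℂ) + ((-dv f w / 2 : ℝ) : ℂ) * I := by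
    rw [wder]; push_cast; ring
  rw [h, Complex.sq_norm, Complex.normSq_add_mul_I]
  ring

def wgrad (x : ℂ → P3) (w : ℂ) : ℂ × ℂ × ℂ := (wder (c1 x) w, wder (c2 x) w, wder (c3 x) w)

lemma sqrt_gradSq_eq (x : ℂ → P3) (w : ℂ) : √(gradSq x w) = 2 * cnorm3 (wgrad x w) := by
  have h : gradSq x w =
      2 ^ 2 * (‖wder (c1 x) w‖ ^ 2 + ‖wder (c2 x) w‖ ^ 2 + ‖wder (c3 x) w‖ ^ 2) := by
    simp only [norm_wder_sq, gradSq, normSq3, gradU, gradV]; ring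
  rw [h, Real.sqrt_mul (by norm_num), Real.sqrt_sq zero_le_two, cnorm3, wgrad]

lemma wgrad_sq_sum (x : ℂ → P3) (w : ℂ) :
    (wgrad x w).1 ^ 2 + (wgrad x w).2.1 ^ 2 + (wgrad x w).2.2 ^ 2 =
      ((normSq3 (gradU x w) - normSq3 (gradV x w) : ℝ)
        - 2 * I * dot3 (gradU x w) (gradV x w)) / 4 := by
  simp only [wgrad, wder, normSq3, dot3, gradU, gradV]
  push_cast
  linear_combination
    ((dv (c1 x) w : ℂ) ^ 2 + (dv (c2 x) w : ℂ) ^ 2 + (dv (c3 x) w : ℂ) ^ 2) / 4 * I_sq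

lemma zpair_eq_zlin (γ : ℝ → ℝ) (ψ : ℝ × ℝ → ℝ) (Q : P3 → P3) (x : ℂ → P3) (w : ℂ) :
    zpair γ ψ Q x w = zlin (psip1 ψ ((x w).1, (x w).2.1)) (psip2 ψ ((x w).1, (x w).2.1))
      (deriv γ (x w).1) (qfun ψ Q (x w)) (wgrad x w) := rfl

namespace HSetting

variable {q₀ ε r : ℝ} {γ : ℝ → ℝ} {ψ : ℝ × ℝ → ℝ} {Q : P3 → P3} {x : ℂ → P3} {w : ℂ}

lemma abs_qfun_le (H : HSetting q₀ ε r γ ψ Q x) (hw : w ∈ closure Bplus) :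
    |qfun ψ Q (x w)| ≤ q₀ :=
  H.hqbound _ (H.hxr w hw).le

lemma abs_fst_le (H : HSetting q₀ ε r γ ψ Q x) (hw : w ∈ closure Bplus) : |(x w).1| ≤ r := by
  have h := H.hxr w hw
  rw [normSq3] at h
  exact abs_le_of_sq_le_sq (by nlinarith [sq_nonneg (x w).2.1, sq_nonneg (x w).2.2]) H.hr.le

lemma abs_snd_fst_le (H : HSetting q₀ ε r γ ψ Q x) (hw : w ∈ closure Bplus) :
    |(x w).2.1| ≤ r := by
  have h := H.hxr w hw
  rw [normSq3] at h
  exact abs_le_of_sq_le_sq (by nlinarith [sq_nonneg (x w).1, sq_nonneg (x w).2.2]) H.hr.le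

lemma abs_deriv_γ_le (H : HSetting q₀ ε r γ ψ Q x) (hw : w ∈ closure Bplus) :
    |deriv γ (x w).1| ≤ ε :=
  H.hsmallγ _ (abs_le.mp (H.abs_fst_le hw))

lemma norm_fderiv_ψ_le (H : HSetting q₀ ε r γ ψ Q x) (hw : w ∈ closure Bplus) :
    ‖fderiv ℝ ψ ((x w).1, (x w).2.1)‖ ≤ ε :=
  H.hsmallψ _ (mem_closedBall_zero_iff.mpr (max_le (H.abs_fst_le hw) (H.abs_snd_fst_le hw)))

lemma wgrad_null (H : HSetting q₀ ε r γ ψ Q x) (hw : w ∈ Bplus) :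
    (wgrad x w).1 ^ 2 + (wgrad x w).2.1 ^ 2 + (wgrad x w).2.2 ^ 2 = 0 := by
  rw [wgrad_sq_sum, H.hconf1 w hw, H.hconf2 w hw]
  simp

end HSetting

theorem zpair_comparable_grad_general (q₀ : ℝ) (hq₀1 : q₀ < 1) :
    ∃ ε > 0, ∀ (r : ℝ) (γ : ℝ → ℝ) (ψ : ℝ × ℝ → ℝ) (Q : P3 → P3) (x : ℂ → P3),
      HSetting q₀ ε r γ ψ Q x →
      ∃ c > 0, ∀ w ∈ Bplus,
        c⁻¹ * Real.sqrt (gradSq x w) ≤ cnorm2 (zpair γ ψ Q x w) ∧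
        cnorm2 (zpair γ ψ Q x w) ≤ c * Real.sqrt (gradSq x w) := by
  have hq₀ : 0 < 1 - q₀ := by linarith
  refine ⟨(1 - q₀) / 40, by positivity, fun r γ ψ Q x H => ⟨20 / (1 - q₀), by positivity, ?_⟩⟩
  intro w hw
  have hw' := subset_closure hw
  have hψ' := H.norm_fderiv_ψ_le hw'
  obtain ⟨hlow, hup⟩ := zlin_comparable (H.abs_qfun_le hw')
    ((abs_psip1_le_norm_fderiv _ _).trans hψ') ((abs_psip2_le_norm_fderiv _ _).trans hψ')
    (H.abs_deriv_γ_le hw') (by linarith) (H.wgrad_null hw)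
  have hN : 0 ≤ cnorm3 (wgrad x w) := Real.sqrt_nonneg _
  rw [zpair_eq_zlin, sqrt_gradSq_eq]
  constructor
  · calc (20 / (1 - q₀))⁻¹ * (2 * cnorm3 (wgrad x w)) = (1 - q₀) / 10 * cnorm3 (wgrad x w) := by
          field_simp; ring
      _ ≤ _ := hlow
  · have hc : 3 ≤ 20 / (1 - q₀) * 2 := by
      rw [div_mul_eq_mul_div, le_div_iff₀ hq₀]; linarith [H.hq₀]
    calc _ ≤ 3 * cnorm3 (wgrad x w) := hup
      _ ≤ 20 / (1 - q₀) * 2 * cnorm3 (wgrad x w) := by gcongr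
      _ = _ := mul_assoc _ _ _

/-- Proposition 2: `z` is comparable to `|∇x|`. -/
theorem zpair_comparable_grad (q₀ : ℝ) (hq₀0 : 0 < q₀) (hq₀1 : q₀ < 1) :
    ∃ ε > 0, ∀ (r : ℝ) (γ : ℝ → ℝ) (ψ : ℝ × ℝ → ℝ) (Q : P3 → P3) (x : ℂ → P3),
      HSetting q₀ ε r γ ψ Q x →
      ∃ c > 0, ∀ w ∈ Bplus,
        c⁻¹ * Real.sqrt (gradSq x w) ≤ cnorm2 (zpair γ ψ Q x w) ∧
        cnorm2 (zpair γ ψ Q x w) ≤ c * Real.sqrt (gradSq x w) :=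
  zpair_comparable_grad_general q₀ hq₀1
end
end
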